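/- arXiv:2401.16983 — 7 statements merged into one kernel-verified Lean document; each statement's English description precedes it below -/
import Mathlib

section
/- Let K and L be compact metrizable spaces. If there exists a homeomorphism φ : K^ℤ → L^ℤ with φ ∘ σ_K = σ_L ∘ φ, then K is homeomorphic to L. -/
/-!
A conjugacy maps fixed points of the shift bijectively and bicontinuously onto fixed points of
the shift, and the fixed points of the shift on `X^ℤ` are exactly the constant sequences, a copy
of `X`.
-/

open Function

def shift {α : Type*} (x : ℤ → α) : ℤ → α := fun m => x (m + 1)

lemma isFixedPt_shift_iff {α : Type*} {x : ℤ → α} :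
    IsFixedPt shift x ↔ x = const ℤ (x 0) := by
  refine ⟨fun h => funext fun m => ?_, fun h => h ▸ rfl⟩
  have hperiodic : Periodic x 1 := congrFun h
  simpa using hperiodic.int_mul_eq m

def Homeomorph.constFixedPtsShift (X : Type*) [TopologicalSpace X] :
    X ≃ₜ {x : ℤ → X // IsFixedPt shift x} where
  toFun k := ⟨const ℤ k, rfl⟩
  invFun x := x.1 0
  left_inv _ := rfl
  right_inv x := Subtype.ext (isFixedPt_shift_iff.1 x.2).symm
  continuous_toFun := by fun_prop
  continuous_invFun := (continuous_apply 0).comp continuous_subtype_val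

def Homeomorph.fixedPtsOfSemiconj {X Y : Type*} [TopologicalSpace X] [TopologicalSpace Y]
    {f : X → X} {g : Y → Y} (φ : X ≃ₜ Y) (h : Semiconj φ f g) :
    {x // IsFixedPt f x} ≃ₜ {y // IsFixedPt g y} :=
  φ.subtype fun x =>
    ⟨fun hx => hx.map h, fun hx => by
      simpa using hx.map (h.inverse_left φ.left_inv φ.right_inv)⟩

theorem stmt_2_general (K L : Type*) [TopologicalSpace K] [TopologicalSpace L]
    (φ : (ℤ → K) ≃ₜ (ℤ → L))
    (hφ : ∀ x : ℤ → K, φ (fun m => x (m + 1)) = fun m => φ x (m + 1)) :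
    Nonempty (K ≃ₜ L) :=
  ⟨(Homeomorph.constFixedPtsShift K).trans <|
    (φ.fixedPtsOfSemiconj (f := shift) (g := shift) hφ).trans
      (Homeomorph.constFixedPtsShift L).symm⟩

/-- If `K` and `L` are compact metrizable spaces and there is a homeomorphism
`φ : K^ℤ → L^ℤ` with `φ ∘ σ_K = σ_L ∘ φ` (where `σ` denotes the shift map),
then `K` is homeomorphic to `L`. -/
theorem stmt_2 (K L : Type*) [TopologicalSpace K] [CompactSpace K]
    [TopologicalSpace.MetrizableSpace K] [TopologicalSpace L] [CompactSpace L]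
    [TopologicalSpace.MetrizableSpace L]
    (φ : (ℤ → K) ≃ₜ (ℤ → L))
    (hφ : ∀ x : ℤ → K, φ (fun m => x (m + 1)) = fun m => φ x (m + 1)) :
    Nonempty (K ≃ₜ L) :=
  stmt_2_general K L φ hφ
end

section
/- Let G be a Polish group acting on a Polish space X by a Borel-measurable action, and let E_G^X be the induced orbit equivalence relation (x E_G^X y iff g·x = y for some g ∈ G). If E_G^X is smooth, i.e., there exists a Borel map θ : X → ℝ such that x E_G^X y if and only if θ(x) = θ(y), then E_G^X has a Borel selector: a Borel map s : X → X such that s(x) E_G^X x for every x ∈ X and s(x) = s(y) whenever x E_G^X y. -/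
open Set Filter Topology MeasureTheory TopologicalSpace

section Quantifier

variable {Y : Type*} [TopologicalSpace Y] [PolishSpace Y]

lemma baire_of_polish : BaireSpace Y := by
  letI := upgradeIsCompletelyMetrizable Y
  infer_instance

/-- a nonempty open set is not meager in a Polish space -/
lemma not_residual_compl_of_open_nonempty {V : Set Y} (hV : IsOpen V) (hne : V.Nonempty) :
    Vᶜ ∉ residual Y := by
  haveI : BaireSpace Y := baire_of_polish
  intro h
  have hd : Dense Vᶜ := dense_of_mem_residual h
  obtain ⟨v, hv⟩ := hne
  obtain ⟨w, hw1, hw2⟩ := hd.exists_mem_open hV ⟨v, hv⟩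
  exact hw1 hw2

/-- the key "localization" formula: for a set `S` with the Baire property and `U` open,
`Sᶜ` is comeager in `U` iff `S` is comeager in no nonempty basic `V ⊆ U`. -/
lemma compl_comeager_iff {S U : Set Y} (hS : BaireMeasurableSet S) (hU : IsOpen U) :
    Uᶜ ∪ Sᶜ ∈ residual Y ↔
      ∀ V ∈ countableBasis Y, V ⊆ U → V.Nonempty → Vᶜ ∪ S ∉ residual Y := by
  constructor
  · intro h V _ hVU hVne hV
    have h2 : (Uᶜ ∪ Sᶜ) ∩ (Vᶜ ∪ S) ∈ residual Y := Filter.inter_mem h hV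
    have h3 : (Uᶜ ∪ Sᶜ) ∩ (Vᶜ ∪ S) ⊆ Vᶜ := by
      rintro y ⟨hy1 | hy1, hy2 | hy2⟩
      · exact fun hyV => hy1 (hVU hyV)
      · exact fun hyV => hy1 (hVU hyV)
      · exact hy2
      · exact absurd hy2 hy1
    exact not_residual_compl_of_open_nonempty (isOpen_of_mem_countableBasis ‹_›) hVne
      (Filter.mem_of_superset h2 h3)
  · intro h
    by_contra hc
    -- `S ∩ U` is not meager
    have hSU : ¬ IsMeagre (S ∩ U) := by
      intro hm
      apply hc
      have : (S ∩ U)ᶜ ⊆ Uᶜ ∪ Sᶜ := by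
        intro y hy
        rcases Classical.em (y ∈ U) with h1 | h1
        · rcases Classical.em (y ∈ S) with h2 | h2
          · exact absurd ⟨h2, h1⟩ hy
          · exact Or.inr h2
        · exact Or.inl h1
      exact Filter.mem_of_superset hm this
    have hBP : BaireMeasurableSet (S ∩ U) := hS.inter hU.baireMeasurableSet
    obtain ⟨W, hWopen, hWeq⟩ := hBP.residualEq_isOpen
    -- N : residual set on which S ∩ U and W agree
    have hN : {y | (y ∈ S ∩ U) = (y ∈ W)} ∈ residual Y := hWeq
    -- W is nonempty
    have hWne : W.Nonempty := by
      rcases W.eq_empty_or_nonempty with h0 | h0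
      · exfalso
        apply hSU
        have : S ∩ U ⊆ {y | (y ∈ S ∩ U) = (y ∈ W)}ᶜ := by
          intro y hy hyN
          have : y ∈ W := by rw [← hyN]; exact hy
          simp [h0] at this
        unfold IsMeagre
        exact Filter.mem_of_superset hN (by
          intro y hy
          by_contra hY
          exact (this (not_not.mp hY)) hy)
      · exact h0
    -- W ∩ U is nonempty (as W ∩ N ⊆ S ∩ U ⊆ U and N is dense)
    have hWU : (W ∩ U).Nonempty := by
      haveI : BaireSpace Y := baire_of_polish
      have hNd : Dense {y | (y ∈ S ∩ U) = (y ∈ W)} := dense_of_mem_residual hN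
      obtain ⟨y, hyN, hyW⟩ := hNd.exists_mem_open hWopen hWne
      have : y ∈ S ∩ U := by rw [Set.mem_setOf_eq] at hyN; rw [hyN]; exact hyW
      exact ⟨y, hyW, this.2⟩
    obtain ⟨y, hy⟩ := hWU
    obtain ⟨V, hVbasis, hyV, hVsub⟩ :=
      (isBasis_countableBasis Y).exists_subset_of_mem_open hy (hWopen.inter hU)
    refine h V hVbasis (hVsub.trans Set.inter_subset_right) ⟨y, hyV⟩ ?_
    -- Vᶜ ∪ S is residual: it contains N
    refine Filter.mem_of_superset hN ?_
    intro z hz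
    rcases Classical.em (z ∈ V) with h1 | h1
    · have hzW : z ∈ W ∩ U := hVsub h1
      have : z ∈ S ∩ U := by rw [Set.mem_setOf_eq] at hz; rw [hz]; exact hzW.1
      exact Or.inr this.1
    · exact Or.inl h1

variable {X : Type*} [MeasurableSpace X] [MeasurableSpace Y] [BorelSpace Y]

/-- The category quantifier theorem: for measurable `A ⊆ X × Y` (`Y` Polish) and `U ⊆ Y` open,
the set of `x` such that the section `A_x` is comeager in `U` is measurable. -/
theorem measurableSet_comeager_section {A : Set (X × Y)} (hA : MeasurableSet A) :
    ∀ U : Set Y, IsOpen U →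
      MeasurableSet {x : X | Uᶜ ∪ {y | (x, y) ∈ A} ∈ residual Y} := by
  -- we prove the statement together with its complement version by induction on `A`
  have key : ∀ A : Set (X × Y), MeasurableSet A →
      (∀ U : Set Y, IsOpen U →
        MeasurableSet {x : X | Uᶜ ∪ {y | (x, y) ∈ A} ∈ residual Y} ∧
        MeasurableSet {x : X | Uᶜ ∪ {y | (x, y) ∈ A}ᶜ ∈ residual Y}) := by
    refine MeasurableSpace.induction_on_inter (m := Prod.instMeasurableSpace)
      generateFrom_prod.symm isPiSystem_prod ?_ ?_ ?_ ?_
    · intro U hU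
      constructor
      · simp only [Set.mem_empty_iff_false, Set.setOf_false, Set.union_empty]
        exact MeasurableSet.const _
      · simp only [Set.mem_empty_iff_false, Set.setOf_false, Set.compl_empty, Set.union_univ]
        simp
    · rintro t ⟨M, hM, B, hB, rfl⟩ U hU
      simp only [Set.mem_setOf_eq] at hM hB
      classical
      have sect : ∀ x : X, {y | (x, y) ∈ M ×ˢ B} = if x ∈ M then B else ∅ := by
        intro x
        by_cases hx : x ∈ M <;> simp [Set.mem_prod, hx]
      constructor
      · have : {x : X | Uᶜ ∪ {y | (x, y) ∈ M ×ˢ B} ∈ residual Y} =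
            (M ∩ {_x : X | Uᶜ ∪ B ∈ residual Y}) ∪
            (Mᶜ ∩ {_x : X | Uᶜ ∪ (∅ : Set Y) ∈ residual Y}) := by
          ext x
          by_cases hx : x ∈ M <;> simp [sect x, hx]
        rw [this]
        exact (hM.inter (MeasurableSet.const _)).union (hM.compl.inter (MeasurableSet.const _))
      · have : {x : X | Uᶜ ∪ {y | (x, y) ∈ M ×ˢ B}ᶜ ∈ residual Y} =
            (M ∩ {_x : X | Uᶜ ∪ Bᶜ ∈ residual Y}) ∪
            (Mᶜ ∩ {_x : X | Uᶜ ∪ (univ : Set Y) ∈ residual Y}) := by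
          ext x
          by_cases hx : x ∈ M <;> simp [sect x, hx]
        rw [this]
        exact (hM.inter (MeasurableSet.const _)).union (hM.compl.inter (MeasurableSet.const _))
    · intro t _ ht U hU
      refine ⟨?_, ?_⟩
      · have : ∀ x : X, {y | (x, y) ∈ tᶜ} = {y | (x, y) ∈ t}ᶜ := fun x => rfl
        simp only [this]
        exact (ht U hU).2
      · have : ∀ x : X, {y | (x, y) ∈ tᶜ}ᶜ = {y | (x, y) ∈ t} := by
          intro x; ext y; simp
        simp only [this]
        exact (ht U hU).1
    · intro f _ hfm hf U hU
      have hsect : ∀ x : X, {y | (x, y) ∈ ⋃ i, f i} = ⋃ i, {y | (x, y) ∈ f i} := by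
        intro x; ext y; simp
      have hsnd : ∀ V : Set Y, IsOpen V →
          MeasurableSet {x : X | Vᶜ ∪ {y | (x, y) ∈ ⋃ i, f i}ᶜ ∈ residual Y} := by
        intro V hV
        have heq : {x : X | Vᶜ ∪ {y | (x, y) ∈ ⋃ i, f i}ᶜ ∈ residual Y} =
            ⋂ i, {x : X | Vᶜ ∪ {y | (x, y) ∈ f i}ᶜ ∈ residual Y} := by
          ext x
          simp only [Set.mem_setOf_eq, Set.mem_iInter, hsect x, Set.compl_iUnion]
          rw [show (Vᶜ ∪ ⋂ i, {y | (x, y) ∈ f i}ᶜ) = ⋂ i, (Vᶜ ∪ {y | (x, y) ∈ f i}ᶜ) from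
            Set.union_iInter _ _]
          exact countable_iInter_mem
        rw [heq]
        exact MeasurableSet.iInter fun i => (hf i V hV).2
      refine ⟨?_, hsnd U hU⟩
      have hBP : ∀ x : X, BaireMeasurableSet ({y | (x, y) ∈ ⋃ i, f i}ᶜ) := by
        intro x
        exact (((MeasurableSet.iUnion hfm).preimage
          measurable_prodMk_left).baireMeasurableSet).compl
      have heq : {x : X | Uᶜ ∪ {y | (x, y) ∈ ⋃ i, f i} ∈ residual Y} =
          ⋂ V ∈ countableBasis Y, {x : X | V ⊆ U → V.Nonempty →
              Vᶜ ∪ {y | (x, y) ∈ ⋃ i, f i}ᶜ ∉ residual Y} := by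
        ext x
        have h1 := compl_comeager_iff (S := {y | (x, y) ∈ ⋃ i, f i}ᶜ) (hBP x) hU
        rw [compl_compl] at h1
        simp only [Set.mem_setOf_eq, Set.mem_iInter]
        exact h1
      rw [heq]
      refine MeasurableSet.biInter (countable_countableBasis Y) (fun V hV => ?_)
      by_cases hc : V ⊆ U ∧ V.Nonempty
      · have h2 : {x : X | V ⊆ U → V.Nonempty →
            Vᶜ ∪ {y | (x, y) ∈ ⋃ i, f i}ᶜ ∉ residual Y} =
            {x : X | Vᶜ ∪ {y | (x, y) ∈ ⋃ i, f i}ᶜ ∈ residual Y}ᶜ := by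
          ext x
          simp only [Set.mem_setOf_eq, Set.mem_compl_iff]
          constructor
          · intro h; exact h hc.1 hc.2
          · intro h _ _; exact h
        rw [h2]
        exact (hsnd V (isOpen_of_mem_countableBasis hV)).compl
      · have h2 : {x : X | V ⊆ U → V.Nonempty →
            Vᶜ ∪ {y | (x, y) ∈ ⋃ i, f i}ᶜ ∉ residual Y} = Set.univ := by
          ext x
          simp only [Set.mem_setOf_eq, Set.mem_univ, iff_true]
          intro h1 h2
          exact absurd ⟨h1, h2⟩ hc
        rw [h2]
        exact MeasurableSet.univ
  exact fun U hU => (key A hA U hU).1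

end Quantifier

open Set Filter Topology MeasureTheory TopologicalSpace

section Engine

/-- auxiliary nonmeager-section measurability -/
theorem measurableSet_nonmeager_section' {X : Type*} [MeasurableSpace X] {Y : Type*}
    [TopologicalSpace Y] [PolishSpace Y] [MeasurableSpace Y] [BorelSpace Y]
    (hq : ∀ (A : Set (X × Y)), MeasurableSet A → ∀ U : Set Y, IsOpen U →
      MeasurableSet {x : X | Uᶜ ∪ {y | (x, y) ∈ A} ∈ residual Y})
    {A : Set (X × Y)} (hA : MeasurableSet A) :
    MeasurableSet {x : X | {y | (x, y) ∈ A}ᶜ ∉ residual Y} := by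
  have h := (hq Aᶜ hA.compl univ isOpen_univ).compl
  have heq : {x : X | univᶜ ∪ {y | (x, y) ∈ Aᶜ} ∈ residual Y}ᶜ =
      {x : X | {y | (x, y) ∈ A}ᶜ ∉ residual Y} := by
    ext x
    simp only [Set.mem_compl_iff, Set.mem_setOf_eq, Set.compl_univ, Set.empty_union]
    rfl
  rwa [heq] at h

theorem borel_selector_engine
    {X : Type*} [MeasurableSpace X]
    {G : Type*} [TopologicalSpace G] [PolishSpace G] [MeasurableSpace G] [BorelSpace G]
    [Nonempty G]
    {P : Type*} [TopologicalSpace P] [PolishSpace P] [MeasurableSpace P] [BorelSpace P]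
    [Nonempty P]
    (hq : ∀ (A : Set (X × G)), MeasurableSet A → ∀ U : Set G, IsOpen U →
      MeasurableSet {x : X | Uᶜ ∪ {g | (x, g) ∈ A} ∈ residual G})
    (j : P → ℝ × X) (hjemb : MeasurableEmbedding j)
    (hjfst : Continuous fun p => (j p).1)
    (F : X → G → ℝ × X) (hF : Measurable fun p : X × G => F p.1 p.2)
    (hfull : ∀ x g, F x g ∈ Set.range j)
    (fst : X → ℝ) (hfst : ∀ x g, (F x g).1 = fst x)
    (R : X → X → Prop)
    (hinv : ∀ x y : X, R x y → ∀ T : Set (ℝ × X),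
      ({g | F x g ∈ T}ᶜ ∈ residual G ↔ {g | F y g ∈ T}ᶜ ∈ residual G)) :
    ∃ σ : X → P, Measurable σ ∧ (∀ x, (j (σ x)).1 = fst x) ∧
      (∀ x y, R x y → σ x = σ y) := by
  classical
  haveI hGB : BaireSpace G := by
    letI := upgradeIsCompletelyMetrizable G
    infer_instance
  letI := upgradeIsCompletelyMetrizable P
  set c : ℕ → P := denseSeq P with hc
  have hcdense : DenseRange c := denseRange_denseSeq P
  -- the scheme sets
  set pc : List ℕ → Set P :=
    fun t => ⋂ (k : ℕ) (_ : k < t.length), Metric.ball (c (t.getD k 0)) ((1/2 : ℝ)^k) with hpc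
  have hpcmeas : ∀ t, MeasurableSet (pc t) := by
    intro t
    exact MeasurableSet.iInter fun k => MeasurableSet.iInter fun _ => measurableSet_ball
  have hpcnil : pc [] = univ := by
    ext p; simp [hpc]
  have hpcmem : ∀ t p, p ∈ pc t ↔ ∀ k < t.length, dist p (c (t.getD k 0)) < (1/2 : ℝ)^k := by
    intro t p; simp [hpc, Metric.mem_ball]
  have hpcappend : ∀ t n, pc (t ++ [n]) = pc t ∩ Metric.ball (c n) ((1/2 : ℝ)^t.length) := by
    intro t n
    ext p
    simp only [hpcmem, Set.mem_inter_iff, Metric.mem_ball, List.length_append,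
      List.length_cons, List.length_nil]
    constructor
    · intro h
      refine ⟨fun k hk => ?_, ?_⟩
      · have := h k (by omega)
        rwa [List.getD_append _ _ _ _ hk] at this
      · have := h t.length (by omega)
        rwa [List.getD_append_right _ _ _ _ (le_refl _), Nat.sub_self] at this
    · rintro ⟨h1, h2⟩ k hk
      rcases Nat.lt_or_ge k t.length with hk' | hk'
      · rw [List.getD_append _ _ _ _ hk']
        exact h1 k hk'
      · have hkeq : k = t.length := by omega
        subst hkeq
        rw [List.getD_append_right _ _ _ _ (le_refl _), Nat.sub_self]
        exact h2
  -- the largeness condition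
  set Cond : X → Set P → Prop := fun x T => {g | F x g ∈ j '' T}ᶜ ∉ residual G with hCond
  have hCondMeas : ∀ T : Set P, MeasurableSet T → MeasurableSet {x | Cond x T} := by
    intro T hT
    have hA : MeasurableSet ((fun p : X × G => F p.1 p.2) ⁻¹' (j '' T)) :=
      hF (hjemb.measurableSet_image.2 hT)
    exact measurableSet_nonmeager_section' hq hA
  have hCondNe : ∀ x T, Cond x T → ∃ g, F x g ∈ j '' T := by
    intro x T h
    by_contra hc
    push_neg at hc
    apply h
    have : {g : G | F x g ∈ j '' T}ᶜ = univ := by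
      ext g
      simp only [Set.mem_compl_iff, Set.mem_setOf_eq, Set.mem_univ, iff_true]
      exact hc g
    rw [this]
    exact Filter.univ_mem
  -- invariance of Cond
  have hCondInv : ∀ x y, R x y → ∀ T : Set P, (Cond x T ↔ Cond y T) :=
    fun x y h T => not_congr (hinv x y h (j '' T))
  -- the Cond of the full space holds
  have hCondNil : ∀ x, Cond x (pc []) := by
    intro x
    rw [hpcnil]
    intro h
    have hd : Dense ({g : G | F x g ∈ j '' univ}ᶜ : Set G) := dense_of_mem_residual h
    obtain ⟨g, hg⟩ := hd.nonempty
    apply hg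
    rw [Set.image_univ]
    exact hfull x _
  -- step existence
  have hstep : ∀ x t, Cond x (pc t) → ∃ n, Cond x (pc (t ++ [n])) := by
    intro x t h
    by_contra hcon
    push_neg at hcon
    apply h
    have hcover : pc t = ⋃ n, (pc (t ++ [n])) := by
      ext p
      simp only [Set.mem_iUnion, hpcappend]
      constructor
      · intro hp
        obtain ⟨n, hn⟩ := hcdense.exists_dist_lt p
          (show (0:ℝ) < (1/2)^t.length by positivity)
        exact ⟨n, hp, by rw [Metric.mem_ball]; exact hn⟩
      · rintro ⟨n, hn, -⟩; exact hn
    have : {g : G | F x g ∈ j '' pc t}ᶜ = ⋂ n, {g : G | F x g ∈ j '' pc (t ++ [n])}ᶜ := by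
      rw [hcover]
      ext g
      simp [Set.image_iUnion]
    rw [this]
    exact countable_iInter_mem.2 fun n => not_not.mp (hcon n)
  -- the choice function
  set pick : X → List ℕ → ℕ := fun x t =>
    if h : ∃ n, Cond x (pc (t ++ [n])) then Nat.find h else 0 with hpick
  set L : X → ℕ → List ℕ := fun x k => Nat.rec [] (fun _ t => t ++ [pick x t]) k with hL
  have hL0 : ∀ x, L x 0 = [] := fun _ => rfl
  have hLsucc : ∀ x k, L x (k+1) = L x k ++ [pick x (L x k)] := fun _ _ => rfl
  have hLlen : ∀ x k, (L x k).length = k := by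
    intro x k
    induction k with
    | zero => rfl
    | succ k ih => rw [hLsucc, List.length_append, ih]; rfl
  -- invariant: Cond x (pc (L x k))
  have hInv : ∀ x k, Cond x (pc (L x k)) := by
    intro x k
    induction k with
    | zero => exact hCondNil x
    | succ k ih =>
      have hex : ∃ n, Cond x (pc (L x k ++ [n])) := hstep x (L x k) ih
      rw [hLsucc]
      have : pick x (L x k) = Nat.find hex := by
        rw [hpick]; simp only [dif_pos hex]
      rw [this]
      exact Nat.find_spec hex
  -- prefix structure
  have hprefix : ∀ x k m, k ≤ m → ∃ u, L x m = L x k ++ u := by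
    intro x k m hkm
    induction m with
    | zero =>
      have : k = 0 := by omega
      exact ⟨[], by simp [this]⟩
    | succ m ih =>
      rcases Nat.lt_or_ge k (m+1) with h | h
      · obtain ⟨u, hu⟩ := ih (by omega)
        exact ⟨u ++ [pick x (L x m)], by rw [hLsucc, hu, List.append_assoc]⟩
      · have : k = m + 1 := by omega
        exact ⟨[], by simp [this]⟩
  have hgetD : ∀ x i m, i < m → (L x m).getD i 0 = pick x (L x i) := by
    intro x i m him
    obtain ⟨u, hu⟩ := hprefix x (i+1) m him
    rw [hu, hLsucc]
    rw [List.getD_append _ _ _ _ (by rw [List.length_append, hLlen]; simp)]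
    rw [List.getD_append_right _ _ _ _ (by rw [hLlen])]
    rw [hLlen, Nat.sub_self]
    rfl
  -- the approximating sequence
  set q : X → ℕ → P := fun x k => c (pick x (L x k)) with hq'
  have hqpc : ∀ x i m, i < m → ∀ w ∈ pc (L x m), dist w (q x i) < (1/2 : ℝ)^i := by
    intro x i m him w hw
    have := (hpcmem (L x m) w).1 hw i (by rw [hLlen]; exact him)
    rwa [hgetD x i m him] at this
  -- witnesses in the pieces, over the fiber
  have hwit : ∀ x k, ∃ w : P, w ∈ pc (L x k) ∧ (j w).1 = fst x := by
    intro x k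
    obtain ⟨g, hg⟩ := hCondNe x _ (hInv x k)
    obtain ⟨w, hw, hjw⟩ := hg
    exact ⟨w, hw, by rw [hjw, hfst]⟩
  -- Cauchy
  have hdistq : ∀ x k m, k ≤ m → dist (q x k) (q x m) < (1/2:ℝ)^k + (1/2:ℝ)^m := by
    intro x k m hkm
    obtain ⟨w, hw, -⟩ := hwit x (m+1)
    calc dist (q x k) (q x m) ≤ dist w (q x k) + dist w (q x m) := dist_triangle_left _ _ _
    _ < (1/2:ℝ)^k + (1/2:ℝ)^m := by
        have h1 := hqpc x k (m+1) (by omega) w hw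
        have h2 := hqpc x m (m+1) (by omega) w hw
        linarith
  have hcauchy : ∀ x, CauchySeq (q x) := by
    intro x
    apply cauchySeq_of_le_geometric (1/2 : ℝ) 2 (by norm_num)
    intro n
    have := hdistq x n (n+1) (by omega)
    have h2 : ((1/2:ℝ))^(n+1) ≤ (1/2:ℝ)^n := by
      apply pow_le_pow_of_le_one <;> norm_num
    calc dist (q x n) (q x (n+1)) ≤ (1/2:ℝ)^n + (1/2:ℝ)^(n+1) := le_of_lt (hdistq x n (n+1) (by omega))
    _ ≤ 2 * (1/2:ℝ)^n := by linarith
  -- the limit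
  set σ : X → P := fun x => limUnder atTop (q x) with hσ
  have htend : ∀ x, Tendsto (q x) atTop (𝓝 (σ x)) := by
    intro x
    obtain ⟨p, hp⟩ := cauchySeq_tendsto_of_complete (hcauchy x)
    exact tendsto_nhds_limUnder ⟨p, hp⟩
  -- measurability
  have hpickmeas : ∀ (t' : List ℕ) (n : ℕ), MeasurableSet {x | pick x t' = n} := by
    intro t' n
    have hset : {x | pick x t' = n} =
        ({x | Cond x (pc (t' ++ [n])) ∧ ∀ m < n, ¬ Cond x (pc (t' ++ [m]))}) ∪
        (if n = 0 then {x | ∀ m, ¬ Cond x (pc (t' ++ [m]))} else ∅) := by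
      ext x
      by_cases h : ∃ m, Cond x (pc (t' ++ [m]))
      · have hp : pick x t' = Nat.find h := by rw [hpick]; simp only [dif_pos h]
        simp only [Set.mem_union, Set.mem_setOf_eq, hp]
        constructor
        · intro he
          left
          rw [← he]
          exact ⟨Nat.find_spec h, fun m hm => Nat.find_min h hm⟩
        · rintro (⟨h1, h2⟩ | h1)
          · exact (Nat.find_eq_iff h).2 ⟨h1, h2⟩
          · exfalso
            rcases n.eq_zero_or_pos with rfl | hn
            · simp only [if_pos rfl, Set.mem_setOf_eq] at h1
              obtain ⟨m, hm⟩ := h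
              exact h1 m hm
            · simp only [if_neg (Nat.pos_iff_ne_zero.1 hn)] at h1
              exact h1
      · have hp : pick x t' = 0 := by rw [hpick]; simp only [dif_neg h]
        push_neg at h
        simp only [Set.mem_union, Set.mem_setOf_eq, hp]
        constructor
        · intro he
          right
          rw [← he]
          simp only [if_pos rfl, Set.mem_setOf_eq]
          exact h
        · rintro (⟨h1, -⟩ | h1)
          · exact absurd h1 (h _)
          · rcases eq_or_ne n 0 with rfl | hn
            · rfl
            · simp [if_neg hn] at h1
    rw [hset]
    refine MeasurableSet.union ?_ ?_
    · rw [Set.setOf_and]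
      refine (hCondMeas _ (hpcmeas _)).inter ?_
      have : {x : X | ∀ m < n, ¬Cond x (pc (t' ++ [m]))} =
          ⋂ (m : ℕ) (_ : m < n), {x | Cond x (pc (t' ++ [m]))}ᶜ := by
        ext x; simp
      rw [this]
      exact MeasurableSet.iInter fun m => MeasurableSet.iInter fun _ =>
        (hCondMeas _ (hpcmeas _)).compl
    · split
      · have : {x : X | ∀ m, ¬Cond x (pc (t' ++ [m]))} =
            ⋂ (m : ℕ), {x | Cond x (pc (t' ++ [m]))}ᶜ := by
          ext x; simp
        rw [this]
        exact MeasurableSet.iInter fun m => (hCondMeas _ (hpcmeas _)).compl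
      · exact MeasurableSet.empty
  have hLmeas : ∀ k (t : List ℕ), MeasurableSet {x | L x k = t} := by
    intro k
    induction k with
    | zero =>
      intro t
      rcases eq_or_ne t [] with rfl | ht
      · have : {x : X | L x 0 = ([] : List ℕ)} = univ := by
          ext x; simp [hL0]
        rw [this]; exact MeasurableSet.univ
      · have : {x : X | L x 0 = t} = ∅ := by
          ext x; simp [hL0, ht.symm]
        rw [this]; exact MeasurableSet.empty
    | succ k ih =>
      intro t
      have hset : {x | L x (k+1) = t} =
          ⋃ (p : {p : List ℕ × ℕ // p.1 ++ [p.2] = t}),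
            ({x | L x k = p.1.1} ∩ {x | pick x p.1.1 = p.1.2}) := by
        ext x
        simp only [Set.mem_iUnion, Set.mem_inter_iff, Set.mem_setOf_eq]
        constructor
        · intro h
          exact ⟨⟨(L x k, pick x (L x k)), by rw [← hLsucc, h]⟩, rfl, rfl⟩
        · rintro ⟨⟨⟨t', n⟩, hp⟩, h1, h2⟩
          rw [hLsucc, h1, h2, hp]
      rw [hset]
      exact MeasurableSet.iUnion fun p => (ih p.1.1).inter (hpickmeas p.1.1 p.1.2)
  have hqmeas : ∀ k, Measurable fun x => q x k := by
    intro k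
    have hg : Measurable fun x => pick x (L x k) := by
      apply measurable_to_countable'
      intro n
      show MeasurableSet {x | pick x (L x k) = n}
      have : {x | pick x (L x k) = n} =
          ⋃ (t : List ℕ), ({x | L x k = t} ∩ {x | pick x t = n}) := by
        ext x
        simp only [Set.mem_iUnion, Set.mem_inter_iff, Set.mem_setOf_eq]
        constructor
        · intro h; exact ⟨L x k, rfl, h⟩
        · rintro ⟨t, h1, h2⟩; rw [h1]; exact h2
      rw [this]
      exact MeasurableSet.iUnion fun t => (hLmeas k t).inter (hpickmeas t n)
    exact measurable_from_top.comp hg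
  have hσmeas : Measurable σ := by
    refine measurable_of_tendsto_metrizable hqmeas ?_
    rw [tendsto_pi_nhds]
    exact fun x => htend x
  have hσfst : ∀ x, (j (σ x)).1 = fst x := by
    intro x
    have hw : ∀ k, ∃ w : P, w ∈ pc (L x (k+1)) ∧ (j w).1 = fst x := fun k => hwit x (k+1)
    choose w hw1 hw2 using hw
    have hdistw : ∀ k, dist (w k) (q x k) < (1/2:ℝ)^k :=
      fun k => hqpc x k (k+1) (by omega) (w k) (hw1 k)
    have hwt : Tendsto w atTop (𝓝 (σ x)) := by
      have h1 : Tendsto (fun k => dist (w k) (σ x)) atTop (𝓝 0) := by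
        apply squeeze_zero (g := fun k => (1/2:ℝ)^k + dist (q x k) (σ x))
          (fun k => dist_nonneg) ?_ ?_
        · intro k
          calc dist (w k) (σ x) ≤ dist (w k) (q x k) + dist (q x k) (σ x) :=
              dist_triangle _ _ _
          _ ≤ (1/2:ℝ)^k + dist (q x k) (σ x) := by linarith [hdistw k]
        · have hd := (tendsto_iff_dist_tendsto_zero.1 (htend x))
          have h2 : Tendsto (fun k:ℕ => (1/2:ℝ)^k) atTop (𝓝 0) :=
            tendsto_pow_atTop_nhds_zero_of_lt_one (by norm_num) (by norm_num)
          simpa using h2.add hd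
      exact tendsto_iff_dist_tendsto_zero.2 h1
    have h3 : Tendsto (fun k => (j (w k)).1) atTop (𝓝 ((j (σ x)).1)) :=
      (hjfst.tendsto (σ x)).comp hwt
    have hconst : (fun k => (j (w k)).1) = fun _ => fst x := funext hw2
    rw [hconst] at h3
    exact tendsto_nhds_unique h3 tendsto_const_nhds
  have hσinv : ∀ x y, R x y → σ x = σ y := by
    intro x y hxy
    have hpickeq : ∀ t, pick x t = pick y t := by
      intro t
      by_cases h : ∃ n, Cond x (pc (t ++ [n]))
      · have h' : ∃ n, Cond y (pc (t ++ [n])) := by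
          obtain ⟨n, hn⟩ := h
          exact ⟨n, (hCondInv x y hxy _).1 hn⟩
        have e1 : pick x t = Nat.find h := by rw [hpick]; simp only [dif_pos h]
        have e2 : pick y t = Nat.find h' := by rw [hpick]; simp only [dif_pos h']
        rw [e1, e2]
        apply le_antisymm
        · exact Nat.find_min' h ((hCondInv x y hxy _).2 (Nat.find_spec h'))
        · exact Nat.find_min' h' ((hCondInv x y hxy _).1 (Nat.find_spec h))
      · have h' : ¬ ∃ n, Cond y (pc (t ++ [n])) := by
          intro hc
          obtain ⟨n, hn⟩ := hc
          exact h ⟨n, (hCondInv x y hxy _).2 hn⟩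
        have e1 : pick x t = 0 := by rw [hpick]; simp only [dif_neg h]
        have e2 : pick y t = 0 := by rw [hpick]; simp only [dif_neg h']
        rw [e1, e2]
    have hLeq : ∀ k, L x k = L y k := by
      intro k
      induction k with
      | zero => rfl
      | succ k ih => rw [hLsucc, hLsucc, ih, hpickeq]
    have hqeq : q x = q y := by
      funext k
      show c (pick x (L x k)) = c (pick y (L y k))
      rw [hLeq k, hpickeq]
    show limUnder atTop (q x) = limUnder atTop (q y)
    rw [hqeq]
  exact ⟨σ, hσmeas, hσfst, hσinv⟩

end Engine

/-- Let `G` be a Polish group acting on a Polish space `X` by a Borel action, and let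
`E_G^X` be the induced orbit equivalence relation. If `E_G^X` is smooth (there is a Borel
map `θ : X → ℝ` with `x E y ↔ θ x = θ y`), then `E_G^X` has a Borel selector: a Borel map
`s : X → X` with `s x` orbit-equivalent to `x` for all `x`, and `s x = s y` whenever
`x E y`. -/
theorem stmt_7 {G X : Type*} [Group G] [TopologicalSpace G] [IsTopologicalGroup G]
    [PolishSpace G] [TopologicalSpace X] [PolishSpace X]
    [MeasurableSpace G] [BorelSpace G] [MeasurableSpace X] [BorelSpace X]
    [MulAction G X] (hact : Measurable fun p : G × X => p.1 • p.2)
    (hsmooth : ∃ θ : X → ℝ, Measurable θ ∧ ∀ x y : X, (∃ g : G, g • x = y) ↔ θ x = θ y) :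
    ∃ s : X → X, Measurable s ∧ (∀ x : X, ∃ g : G, g • x = s x) ∧
      ∀ x y : X, (∃ g : G, g • x = y) → s x = s y := by
  classical
  obtain ⟨θ, hθ, hθiff⟩ := hsmooth
  rcases isEmpty_or_nonempty X with hX | hX
  · exact ⟨id, measurable_id, fun x => (hX.false x).elim, fun x y h => ((hX.false x).elim)⟩
  haveI : Nonempty G := ⟨1⟩
  -- the Borel set coding the smooth equivalence relation
  have hB' : MeasurableSet {p : ℝ × X | θ p.2 = p.1} :=
    measurableSet_eq_fun (hθ.comp measurable_snd) measurable_fst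
  obtain ⟨t', ht'le, ht'polish, ht'closed, -⟩ := hB'.isClopenable
  letI tprod : TopologicalSpace (ℝ × X) := instTopologicalSpaceProd
  set P := {p : ℝ × X // θ p.2 = p.1} with hP
  letI tP : TopologicalSpace P := @instTopologicalSpaceSubtype _ _ t'
  haveI hPP : PolishSpace P := @IsClosed.polishSpace _ t' ht'polish _ ht'closed
  letI mP : MeasurableSpace P := @borel P tP
  haveI hPB : @BorelSpace P tP mP := ⟨rfl⟩
  haveI : Nonempty P := ⟨⟨(θ hX.some, hX.some), rfl⟩⟩
  -- the inclusion of P into ℝ × X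
  have hjcont1 : Continuous (Subtype.val : P → ℝ × X) :=
    continuous_le_dom (induced_mono ht'le) continuous_induced_dom
  have hjemb : MeasurableEmbedding (Subtype.val : P → ℝ × X) :=
    hjcont1.measurableEmbedding Subtype.val_injective
  have hjfst : Continuous fun p : P => (p.val).1 := continuous_fst.comp hjcont1
  -- the map F
  set F : X → G → ℝ × X := fun x g => (θ x, g • x) with hFdef
  have hF : Measurable fun p : X × G => F p.1 p.2 := by
    apply Measurable.prodMk (hθ.comp measurable_fst)
    exact hact.comp measurable_swap
  have hfull : ∀ (x : X) (g : G), F x g ∈ Set.range (Subtype.val : P → ℝ × X) := by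
    intro x g
    have h : θ (g • x) = θ x := ((hθiff x (g • x)).mp ⟨g, rfl⟩).symm
    exact ⟨⟨(θ x, g • x), h⟩, rfl⟩
  have hfst : ∀ (x : X) (g : G), (F x g).1 = θ x := fun _ _ => rfl
  -- invariance
  have hinv : ∀ x y : X, (∃ g : G, g • x = y) → ∀ T : Set (ℝ × X),
      ({g | F x g ∈ T}ᶜ ∈ residual G ↔ {g | F y g ∈ T}ᶜ ∈ residual G) := by
    intro x y hxy T
    obtain ⟨g₀, rfl⟩ := hxy
    have hθ' : θ (g₀ • x) = θ x := ((hθiff x (g₀ • x)).mp ⟨g₀, rfl⟩).symm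
    set ρ : G ≃ₜ G := Homeomorph.mulRight g₀ with hρ
    have key : ∀ S : Set G, (ρ ⁻¹' S ∈ residual G ↔ S ∈ residual G) := by
      intro S
      conv_rhs => rw [← Homeomorph.residual_map_eq ρ]
      exact Iff.rfl
    have hset : {g : G | F (g₀ • x) g ∈ T} = ρ ⁻¹' {g : G | F x g ∈ T} := by
      ext g
      have : F (g₀ • x) g = F x (g * g₀) := by
        rw [hFdef]
        simp only
        rw [hθ', mul_smul]
      simp only [Set.mem_preimage, Set.mem_setOf_eq, hρ, Homeomorph.coe_mulRight, this]
    rw [hset, ← Set.preimage_compl]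
    exact (key _).symm
  obtain ⟨σ, hσmeas, hσfst, hσinv⟩ :=
    borel_selector_engine
      (fun A hA => measurableSet_comeager_section hA)
      (Subtype.val : P → ℝ × X) hjemb hjfst F hF hfull θ hfst
      (fun x y => ∃ g : G, g • x = y) hinv
  refine ⟨fun x => ((σ x) : ℝ × X).2, ?_, ?_, ?_⟩
  · exact measurable_snd.comp (hjemb.measurable.comp hσmeas)
  · intro x
    have h1 : θ ((σ x : ℝ × X).2) = (σ x : ℝ × X).1 := (σ x).prop
    have h2 : (σ x : ℝ × X).1 = θ x := hσfst x
    exact (hθiff x _).mpr (by rw [h1, h2])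
  · intro x y hxy
    exact congrArg (fun p : P => (p : ℝ × X).2) (hσinv x y hxy)
end

section
/- Let X be a locally connected continuum, h : X → X a topologically transitive homeomorphism, and x ∈ X a fixed point of h. Then X ∖ {x} has only finitely many connected components; moreover, h permutes these components cyclically, and if n is their number then for each such component C the map h^n maps the closure of C onto itself and the restriction of h^n to the closure of C is topologically transitive. -/
/-!
The components of `X \ {x}` are open (local connectedness) and pairwise disjoint, and since
`h` fixes `x` it permutes them. Transitivity of `h` then forces every component to reach every
other one under iteration; in particular each component `C` returns to itself after applying `h`
to `h '' C`, so the components form a single periodic orbit of `Set.image h`, whose length is their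
number `n`. If `h^[m]` maps a point of `U ∩ C` into `V ∩ C`, then `h^[m] '' C = C`, so `n ∣ m`.
-/

open Function Set

def IsTopologicallyTransitive {X : Type*} [TopologicalSpace X] (f : X → X) : Prop :=
  ∀ U V : Set X, IsOpen U → IsOpen V → U.Nonempty → V.Nonempty → ∃ n : ℕ, (f^[n] '' U ∩ V).Nonempty

namespace Function

variable {α : Type*} {f : α → α} {a : α} {s : Set α}

theorem range_iterate_eq_image_Iio_minimalPeriod (ha : a ∈ periodicPts f) :
    range (f^[·] a) = (f^[·] a) '' Iio (minimalPeriod f a) := by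
  refine (image_subset_range _ _).antisymm' ?_
  rintro _ ⟨n, rfl⟩
  exact ⟨n % minimalPeriod f a, Nat.mod_lt _ (minimalPeriod_pos_of_mem_periodicPts ha),
    iterate_mod_minimalPeriod_eq⟩

theorem ncard_range_iterate (ha : a ∈ periodicPts f) :
    (range (f^[·] a)).ncard = minimalPeriod f a := by
  rw [range_iterate_eq_image_Iio_minimalPeriod ha,
    iterate_injOn_Iio_minimalPeriod.ncard_image, ncard_Iio_nat]

theorem finite_range_iterate (ha : a ∈ periodicPts f) : (range (f^[·] a)).Finite := by
  rw [range_iterate_eq_image_Iio_minimalPeriod ha]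
  exact (finite_Iio _).image _

theorem mem_periodicPts_of_forall_exists_iterate_eq (hs : ∀ a ∈ s, ∀ b ∈ s, ∃ k, f^[k] a = b)
    (hfs : MapsTo f s s) (ha : a ∈ s) : a ∈ periodicPts f := by
  obtain ⟨k, hk⟩ := hs (f a) (hfs ha) a ha
  exact mk_mem_periodicPts k.succ_pos (by rwa [IsPeriodicPt, IsFixedPt, iterate_succ_apply])

theorem eq_range_iterate_of_forall_exists_iterate_eq (hs : ∀ a ∈ s, ∀ b ∈ s, ∃ k, f^[k] a = b)
    (hfs : MapsTo f s s) (ha : a ∈ s) : s = range (f^[·] a) :=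
  Subset.antisymm (fun b hb => hs a ha b hb) (range_subset_iff.2 fun n => hfs.iterate n ha)

theorem finite_of_forall_exists_iterate_eq (hs : ∀ a ∈ s, ∀ b ∈ s, ∃ k, f^[k] a = b)
    (hfs : MapsTo f s s) : s.Finite := by
  rcases s.eq_empty_or_nonempty with rfl | ⟨a, ha⟩
  · exact finite_empty
  · rw [eq_range_iterate_of_forall_exists_iterate_eq hs hfs ha]
    exact finite_range_iterate (mem_periodicPts_of_forall_exists_iterate_eq hs hfs ha)

theorem minimalPeriod_eq_ncard_of_forall_exists_iterate_eq
    (hs : ∀ a ∈ s, ∀ b ∈ s, ∃ k, f^[k] a = b) (hfs : MapsTo f s s) (ha : a ∈ s) :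
    minimalPeriod f a = s.ncard := by
  rw [eq_range_iterate_of_forall_exists_iterate_eq hs hfs ha,
    ncard_range_iterate (mem_periodicPts_of_forall_exists_iterate_eq hs hfs ha)]

end Function

section Components

variable {X : Type*} [TopologicalSpace X] {K C D : Set X}

theorem eq_of_mem_image_connectedComponentIn (hC : C ∈ connectedComponentIn K '' K)
    (hD : D ∈ connectedComponentIn K '' K) (hCD : (C ∩ D).Nonempty) : C = D := by
  obtain ⟨y, -, rfl⟩ := hC
  obtain ⟨z, -, rfl⟩ := hD
  obtain ⟨w, hwy, hwz⟩ := hCD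
  rw [connectedComponentIn_eq hwy, connectedComponentIn_eq hwz]

theorem Homeomorph.image_iterate_closure (h : X ≃ₜ X) (n : ℕ) (s : Set X) :
    h^[n] '' closure s = closure (h^[n] '' s) := by
  have hcomm : Function.Commute closure (Set.image h) := fun s => (h.image_closure s).symm
  simpa only [image_iterate_eq] using (hcomm.iterate_right n s).symm

theorem Homeomorph.semiconj_connectedComponentIn (h : X ≃ₜ X) (hK : h '' K = K) :
    Semiconj (connectedComponentIn K) h (Set.image h) := by
  intro y
  by_cases hy : y ∈ K
  · rw [h.image_connectedComponentIn hy, hK]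
  · have hhy : h y ∉ K := by rwa [← hK, h.injective.mem_set_image]
    rw [connectedComponentIn_eq_empty hy, connectedComponentIn_eq_empty hhy, image_empty]

theorem Homeomorph.mapsTo_image_connectedComponentIn (h : X ≃ₜ X) (hK : h '' K = K) :
    MapsTo (Set.image h) (connectedComponentIn K '' K) (connectedComponentIn K '' K) := by
  rintro _ ⟨y, hy, rfl⟩
  exact ⟨h y, hK ▸ mem_image_of_mem h hy, h.semiconj_connectedComponentIn hK y⟩

variable [LocallyConnectedSpace X] {h : X ≃ₜ X}

theorem IsTopologicallyTransitive.exists_iterate_image_connectedComponentIn_eq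
    (htrans : IsTopologicallyTransitive h) (hKo : IsOpen K) (hK : h '' K = K)
    (hC : C ∈ connectedComponentIn K '' K) (hD : D ∈ connectedComponentIn K '' K)
    {U V : Set X} (hU : IsOpen U) (hV : IsOpen V) (hUC : (U ∩ C).Nonempty)
    (hVD : (V ∩ D).Nonempty) :
    ∃ m, (image h)^[m] C = D ∧ (h^[m] '' (U ∩ C) ∩ (V ∩ D)).Nonempty := by
  have hopen {E} (hE : E ∈ connectedComponentIn K '' K) : IsOpen E := by
    obtain ⟨y, -, rfl⟩ := hE
    exact hKo.connectedComponentIn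
  obtain ⟨m, hm⟩ := htrans _ _ (hU.inter (hopen hC)) (hV.inter (hopen hD)) hUC hVD
  refine ⟨m, eq_of_mem_image_connectedComponentIn
    ((h.mapsTo_image_connectedComponentIn hK).iterate m hC) hD ?_, hm⟩
  rw [← image_iterate_eq]
  exact hm.mono (inter_subset_inter (image_mono inter_subset_right) inter_subset_right)

theorem IsTopologicallyTransitive.forall_exists_iterate_image_connectedComponentIn_eq
    (htrans : IsTopologicallyTransitive h) (hKo : IsOpen K) (hK : h '' K = K) :
    ∀ C ∈ connectedComponentIn K '' K, ∀ D ∈ connectedComponentIn K '' K,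
      ∃ k, (image h)^[k] C = D := by
  intro C hC D hD
  have hne {E} (hE : E ∈ connectedComponentIn K '' K) : (univ ∩ E).Nonempty := by
    obtain ⟨y, hy, rfl⟩ := hE
    exact ⟨y, trivial, mem_connectedComponentIn hy⟩
  obtain ⟨k, hk, -⟩ := htrans.exists_iterate_image_connectedComponentIn_eq hKo hK hC hD
    isOpen_univ isOpen_univ (hne hC) (hne hD)
  exact ⟨k, hk⟩

end Components

theorem stmt_9_general (X : Type*) [TopologicalSpace X]
    [LocallyConnectedSpace X] [TopologicalSpace.MetrizableSpace X]
    (h : X ≃ₜ X)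
    (htrans : ∀ U V : Set X, IsOpen U → IsOpen V → U.Nonempty → V.Nonempty →
        ∃ n : ℕ, ((⇑h)^[n] '' U ∩ V).Nonempty)
    (x : X) (hx : h x = x)
    (S : Set (Set X)) (hS : S = {C | ∃ y : X, y ≠ x ∧ C = connectedComponentIn {x}ᶜ y}) :
    S.Finite ∧
      (∀ C ∈ S, ⇑h '' C ∈ S) ∧
      (∀ C ∈ S, ∀ D ∈ S, ∃ k : ℕ, (⇑h)^[k] '' C = D) ∧
      (∀ C ∈ S,
        (⇑h)^[S.ncard] '' closure C = closure C ∧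
        ∀ U V : Set X, IsOpen U → IsOpen V →
          (U ∩ closure C).Nonempty → (V ∩ closure C).Nonempty →
            ∃ k : ℕ, ((⇑h)^[S.ncard * k] '' (U ∩ closure C) ∩ V).Nonempty) := by
  have htrans : IsTopologicallyTransitive h := htrans
  have hopen : IsOpen ({x}ᶜ : Set X) := isOpen_compl_singleton
  have hK : h '' {x}ᶜ = {x}ᶜ := by rw [image_compl_eq h.bijective, image_singleton, hx]
  obtain rfl : S = connectedComponentIn {x}ᶜ '' {x}ᶜ := by
    rw [hS]
    ext C
    simp [eq_comm]
  have hmaps := h.mapsTo_image_connectedComponentIn hK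
  have hmin := htrans.forall_exists_iterate_image_connectedComponentIn_eq hopen hK
  have hperiod {C} (hC : C ∈ connectedComponentIn {x}ᶜ '' {x}ᶜ) :=
    minimalPeriod_eq_ncard_of_forall_exists_iterate_eq hmin hmaps hC
  refine ⟨finite_of_forall_exists_iterate_eq hmin hmaps, fun C hC => hmaps hC,
    fun C hC D hD => by simpa only [image_iterate_eq] using hmin C hC D hD,
    fun C hC => ⟨?_, ?_⟩⟩
  · rw [h.image_iterate_closure, image_iterate_eq, ← hperiod hC, iterate_minimalPeriod]
  · rintro U V hU hV ⟨u, huU, huC⟩ ⟨v, hvV, hvC⟩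
    obtain ⟨m, hmC, hm⟩ := htrans.exists_iterate_image_connectedComponentIn_eq hopen hK hC hC hU hV
      (mem_closure_iff.1 huC U hU huU) (mem_closure_iff.1 hvC V hV hvV)
    rw [← hperiod hC]
    obtain ⟨k, rfl⟩ := IsPeriodicPt.minimalPeriod_dvd hmC
    exact ⟨k, hm.mono (inter_subset_inter
      (image_mono (inter_subset_inter_right _ subset_closure)) inter_subset_left)⟩

/-- Let `X` be a locally connected continuum, `h : X → X` a topologically transitive
homeomorphism and `x` a fixed point of `h`. Let `S` be the set of connected components
of `X \ {x}`. Then `S` is finite, `h` permutes the members of `S` cyclically (the image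
of each component is a component, and any component can be mapped onto any other by an
iterate of `h`), and, `n` being the number of components, for every `C ∈ S` the map `h^n`
maps the closure of `C` onto itself and its restriction to the closure of `C` is
topologically transitive. -/
theorem stmt_9 (X : Type*) [TopologicalSpace X] [CompactSpace X] [ConnectedSpace X]
    [LocallyConnectedSpace X] [TopologicalSpace.MetrizableSpace X] [Nonempty X]
    (h : X ≃ₜ X)
    (htrans : ∀ U V : Set X, IsOpen U → IsOpen V → U.Nonempty → V.Nonempty →
        ∃ n : ℕ, ((⇑h)^[n] '' U ∩ V).Nonempty)
    (x : X) (hx : h x = x)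
    (S : Set (Set X)) (hS : S = {C | ∃ y : X, y ≠ x ∧ C = connectedComponentIn {x}ᶜ y}) :
    S.Finite ∧
      (∀ C ∈ S, ⇑h '' C ∈ S) ∧
      (∀ C ∈ S, ∀ D ∈ S, ∃ k : ℕ, (⇑h)^[k] '' C = D) ∧
      (∀ C ∈ S,
        (⇑h)^[S.ncard] '' closure C = closure C ∧
        ∀ U V : Set X, IsOpen U → IsOpen V →
          (U ∩ closure C).Nonempty → (V ∩ closure C).Nonempty →
            ∃ k : ℕ, ((⇑h)^[S.ncard * k] '' (U ∩ closure C) ∩ V).Nonempty) :=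
  stmt_9_general X h htrans x hx S hS
end

section
/- For every metrizable continuum K with more than one point there exists a compact metrizable space X such that: X has no isolated points; the union of the degenerate (singleton) connected components of X is dense in X; X has countably infinitely many nondegenerate connected components, each homeomorphic to K; and the nondegenerate components of X form a null sequence, i.e., for every ε > 0 (with respect to a fixed compatible metric) only finitely many components of X have diameter at least ε. In other words, X is a tame cantoroid all of whose nondegenerate components are copies of K. -/
/-!
Take a continuous surjection `f` from the Cantor space `ℕ → Bool` onto `K` (Hausdorff–Alexandroff)
and an isometric embedding `κ` of `K` into `ℓ^∞`. For `t, u` in `{0} ∪ {1/(n+1)}` and `c : ℕ → Bool`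
put `point t u c = (t, t u, t u c̃, t κ(f c))`, where `c̃` is the real Cantor-set point coded by `c`.
The level `(t, t u)` takes countably many values, hence is constant on components. Over a level
`(t, 0)` lies the copy `t κ(K)` of `K`; over a level with `t u ≠ 0` the third coordinate identifies
the fibre with a Cantor set, so its points are degenerate components. These Cantor levels
accumulate on every copy as `u → 0`, and the copies have diameter at most `t diam K → 0`.
-/

open Set Filter Topology Metric Function

instance Pi.perfectSpace {ι : Type*} {α : ι → Type*} [∀ i, TopologicalSpace (α i)]
    [∀ i, Nontrivial (α i)] [Infinite ι] : PerfectSpace (∀ i, α i) := by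
  classical
  refine perfectSpace_iff_forall_not_isolated.2 fun x => ?_
  choose y hy using fun i => exists_ne (x i)
  have : Tendsto (fun j => update x j (y j)) cofinite (𝓝[≠] x) := by
    refine tendsto_nhdsWithin_iff.2 ⟨tendsto_pi_nhds.2 fun i => ?_, .of_forall fun j h => ?_⟩
    · exact tendsto_const_nhds.congr'
        ((eventually_cofinite_ne i).mono fun j hj => (update_of_ne hj.symm _ _).symm)
    · exact hy j (by simpa using congrFun h j)
  exact this.neBot

theorem Continuous.apply_eq_of_mem_connectedComponent {X Y : Type*} [TopologicalSpace X]
    [MetricSpace Y] {g : X → Y} (hg : Continuous g) (hc : (range g).Countable) {x y : X}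
    (hy : y ∈ connectedComponent x) : g y = g x :=
  hc.isTotallyDisconnected _ (image_subset_range g _)
    (isPreconnected_connectedComponent.image g hg.continuousOn)
    (mem_image_of_mem g hy) (mem_image_of_mem g mem_connectedComponent)

noncomputable section

namespace Cantoroid

def scales : Set ℝ := insert 0 (range fun n : ℕ => 1 / ((n : ℝ) + 1))

theorem isCompact_scales : IsCompact scales :=
  tendsto_one_div_add_atTop_nhds_zero_nat.isCompact_insert_range

instance : CompactSpace scales := isCompact_iff_compactSpace.1 isCompact_scales

theorem countable_scales : scales.Countable := (countable_range _).insert 0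

instance : Zero scales := ⟨⟨0, mem_insert _ _⟩⟩

@[simp] theorem coe_zero : ((0 : scales) : ℝ) = 0 := rfl

def scale (n : ℕ) : scales := ⟨1 / ((n : ℝ) + 1), mem_insert_of_mem _ (mem_range_self n)⟩

theorem scale_pos (n : ℕ) : 0 < (scale n : ℝ) := by simp only [scale]; positivity

theorem scale_injective : Injective scale := fun m n h => by
  simpa [scale] using congrArg Subtype.val h

theorem tendsto_scale : Tendsto (fun n => (scale n : ℝ)) atTop (𝓝 0) :=
  tendsto_one_div_add_atTop_nhds_zero_nat

theorem eq_zero_or_eq_scale (t : scales) : (t : ℝ) = 0 ∨ ∃ n, t = scale n := by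
  obtain ⟨t, rfl | ⟨n, rfl⟩⟩ := t
  exacts [Or.inl rfl, Or.inr ⟨n, rfl⟩]

theorem dense_scales_ne_zero : Dense {t : scales | (t : ℝ) ≠ 0} := by
  intro t
  rcases eq_zero_or_eq_scale t with ht | ⟨n, rfl⟩
  · exact mem_closure_of_tendsto (b := atTop) (tendsto_subtype_rng.2 (ht ▸ tendsto_scale))
      (.of_forall fun n => (scale_pos n).ne')
  · exact subset_closure (scale_pos n).ne'

def cantorReal (c : ℕ → Bool) : ℝ := cantorSetHomeomorphNatToBool.symm c

theorem isEmbedding_cantorReal : IsEmbedding cantorReal :=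
  IsEmbedding.subtypeVal.comp cantorSetHomeomorphNatToBool.symm.isEmbedding

variable {K V : Type*} [NormedAddCommGroup V] [NormedSpace ℝ V]
  (κ : K → V) (f : (ℕ → Bool) → K)

abbrev Param : Type := scales × scales × (ℕ → Bool)

def point (p : Param) : ℝ × ℝ × ℝ × V :=
  (p.1, p.1 * p.2.1, p.1 * p.2.1 * cantorReal p.2.2, (p.1 : ℝ) • κ (f p.2.2))

def cantoroid : Set (ℝ × ℝ × ℝ × V) := range (point κ f)

def proj : Param → cantoroid κ f := rangeFactorization (point κ f)

theorem coe_proj (p : Param) : (proj κ f p : ℝ × ℝ × ℝ × V) = point κ f p := rfl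

theorem surjective_proj : Surjective (proj κ f) := rangeFactorization_surjective

variable {κ f}

theorem proj_eq_proj {p q : Param} (h₁ : (q.1 : ℝ) = p.1) (h₂ : (q.1 : ℝ) * q.2.1 = p.1 * p.2.1)
    (h₃ : q.2.2 = p.2.2) : proj κ f q = proj κ f p :=
  Subtype.ext <| by rw [coe_proj, coe_proj, point, point, h₂, h₁, h₃]

theorem level_eq_of_mem_connectedComponent {x y : cantoroid κ f}
    (hy : y ∈ connectedComponent x) :
    (y : ℝ × ℝ × ℝ × V).1 = (x : ℝ × ℝ × ℝ × V).1 ∧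
      (y : ℝ × ℝ × ℝ × V).2.1 = (x : ℝ × ℝ × ℝ × V).2.1 := by
  refine Prod.ext_iff.1 (Continuous.apply_eq_of_mem_connectedComponent
    (continuous_subtype_val.fst.prodMk continuous_subtype_val.snd.fst) ?_ hy)
  refine ((countable_scales.prod countable_scales).image fun q => (q.1, q.1 * q.2)).mono ?_
  rintro _ ⟨⟨_, p, rfl⟩, rfl⟩
  exact ⟨((p.1 : ℝ), (p.2.1 : ℝ)), ⟨p.1.2, p.2.1.2⟩, rfl⟩

variable (κ) in
def copy (hf : Surjective f) (t : scales) (k : K) : cantoroid κ f :=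
  ⟨((t : ℝ), 0, 0, (t : ℝ) • κ k), by
    obtain ⟨c, rfl⟩ := hf k
    exact ⟨(t, 0, c), by simp [point]⟩⟩

theorem proj_eq_copy (hf : Surjective f) {p : Param} (hp : (p.1 : ℝ) * p.2.1 = 0) :
    proj κ f p = copy κ hf p.1 (f p.2.2) :=
  Subtype.ext <| by simp [coe_proj, point, copy, hp]

theorem connectedComponent_proj_of_mul_ne_zero {p : Param} (hp : (p.1 : ℝ) * p.2.1 ≠ 0) :
    connectedComponent (proj κ f p) = {proj κ f p} := by
  set C := connectedComponent (proj κ f p)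
  have hlevel : ∀ q, proj κ f q ∈ C → (q.1 : ℝ) = p.1 ∧ (q.1 : ℝ) * q.2.1 = p.1 * p.2.1 :=
    fun q hq => level_eq_of_mem_connectedComponent hq
  let g : cantoroid κ f → ℝ := fun x => (x : ℝ × ℝ × ℝ × V).2.2.1 / (p.1 * p.2.1)
  have hg : ∀ q, proj κ f q ∈ C → g (proj κ f q) = cantorReal q.2.2 := fun q hq => by
    simp only [g, coe_proj, point, (hlevel q hq).2]
    exact mul_div_cancel_left₀ _ hp
  have hgC : (g '' C).Subsingleton := by
    refine isEmbedding_cantorReal.isTotallyDisconnected_range.2 inferInstance _ ?_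
      (isPreconnected_connectedComponent.image g (by fun_prop))
    rintro _ ⟨x, hx, rfl⟩
    obtain ⟨q, rfl⟩ := surjective_proj κ f x
    exact ⟨q.2.2, (hg q hx).symm⟩
  refine eq_singleton_iff_unique_mem.2 ⟨mem_connectedComponent, fun y hy => ?_⟩
  obtain ⟨q, rfl⟩ := surjective_proj κ f y
  have hc : q.2.2 = p.2.2 := isEmbedding_cantorReal.injective <| by
    rw [← hg q hy, ← hg p mem_connectedComponent]
    exact hgC (mem_image_of_mem g hy) (mem_image_of_mem g mem_connectedComponent)
  exact proj_eq_proj (hlevel q hy).1 (hlevel q hy).2 hc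

theorem range_copy_injective [Nonempty K] (hf : Surjective f) :
    Injective fun t => range (copy κ hf t) := fun t t' h => by
  obtain ⟨k⟩ := ‹Nonempty K›
  obtain ⟨k', hk'⟩ : copy κ hf t k ∈ range (copy κ hf t') := by
    simp only at h
    exact h ▸ mem_range_self k
  exact Subtype.ext (congrArg (fun x : cantoroid κ f => (x : ℝ × ℝ × ℝ × V).1) hk').symm

section Topology

variable [TopologicalSpace K]

theorem continuous_point (hκ : Continuous κ) (hf : Continuous f) : Continuous (point κ f) := by
  have := isEmbedding_cantorReal.continuous
  unfold point; fun_prop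

theorem continuous_proj (hκ : Continuous κ) (hf : Continuous f) : Continuous (proj κ f) :=
  (continuous_point hκ hf).rangeFactorization

theorem isCompact_cantoroid (hκ : Continuous κ) (hf : Continuous f) :
    IsCompact (cantoroid κ f) :=
  isCompact_range (continuous_point hκ hf)

theorem continuous_copy (hκ : Continuous κ) (hf : Surjective f) (t : scales) :
    Continuous (copy κ hf t) :=
  Continuous.subtype_mk (by fun_prop) _

theorem connectedComponent_proj_of_mul_eq_zero [PreconnectedSpace K] (hκ : Continuous κ)
    (hf : Surjective f) {p : Param} (hp : (p.1 : ℝ) * p.2.1 = 0) :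
    connectedComponent (proj κ f p) = range (copy κ hf p.1) := by
  refine Subset.antisymm (fun y hy => ?_)
    ((isPreconnected_range (continuous_copy hκ hf _)).subset_connectedComponent
      ⟨f p.2.2, (proj_eq_copy hf hp).symm⟩)
  obtain ⟨q, rfl⟩ := surjective_proj κ f y
  obtain ⟨h₁, h₂⟩ := level_eq_of_mem_connectedComponent hy
  rw [proj_eq_copy hf (h₂.trans hp), Subtype.ext h₁]
  exact mem_range_self _

theorem dense_snd_ne_zero (hκ : Continuous κ) (hf : Continuous f) :
    Dense {x : cantoroid κ f | (x : ℝ × ℝ × ℝ × V).2.1 ≠ 0} := by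
  refine ((surjective_proj κ f).denseRange.dense_image (continuous_proj hκ hf)
    (dense_scales_ne_zero.prod (dense_scales_ne_zero.prod dense_univ))).mono ?_
  rintro _ ⟨p, ⟨h₁, h₂, -⟩, rfl⟩
  exact mul_ne_zero h₁ h₂

theorem dense_setOf_connectedComponent_eq_singleton (hκ : Continuous κ) (hf : Continuous f) :
    Dense {x : cantoroid κ f | connectedComponent x = {x}} :=
  (dense_snd_ne_zero hκ hf).mono fun x hx => by
    obtain ⟨p, rfl⟩ := surjective_proj κ f x
    exact connectedComponent_proj_of_mul_ne_zero hx

theorem perfectSpace_cantoroid (hκ : Continuous κ) (hf : Continuous f) :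
    PerfectSpace (cantoroid κ f) := by
  refine perfectSpace_iff_forall_not_isolated.2 fun x => ?_
  obtain ⟨p, rfl⟩ := surjective_proj κ f x
  by_cases hp : (p.1 : ℝ) * p.2.1 = 0
  · refine (mem_closure_iff_nhdsWithin_neBot.1 (dense_snd_ne_zero hκ hf (proj κ f p))).mono
      (nhdsWithin_mono _ fun y hy hyp => hy ?_)
    rw [mem_singleton_iff.1 hyp]
    exact hp
  · let g : (ℕ → Bool) → cantoroid κ f := fun c => proj κ f (p.1, p.2.1, c)
    have hg : Injective g := fun c c' h => isEmbedding_cantorReal.injective <|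
      mul_left_cancel₀ hp (congrArg (fun x : cantoroid κ f => (x : ℝ × ℝ × ℝ × V).2.2.1) h :)
    have hgc : Continuous g := (continuous_proj hκ hf).comp (by fun_prop)
    exact (hgc.continuousWithinAt.tendsto_nhdsWithin (s := {p.2.2}ᶜ) (t := {g p.2.2}ᶜ)
      fun c hc => hg.ne hc).neBot

end Topology

section Metric

variable [MetricSpace K]

theorem dist_copy (hκ : Isometry κ) (hf : Surjective f) (t : scales) (k k' : K) :
    dist (copy κ hf t k) (copy κ hf t k') = |(t : ℝ)| * dist k k' := by
  simp [Subtype.dist_eq, copy, Prod.dist_eq, dist_smul₀, hκ.dist_eq]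
  positivity

theorem copy_injective (hκ : Isometry κ) (hf : Surjective f) {t : scales} (ht : (t : ℝ) ≠ 0) :
    Injective (copy κ hf t) := fun k k' h => by
  simpa [ht, dist_copy hκ hf, h] using (dist_copy hκ hf t k k').symm

theorem isEmbedding_copy [CompactSpace K] (hκ : Isometry κ) (hf : Surjective f) {t : scales}
    (ht : (t : ℝ) ≠ 0) : IsEmbedding (copy κ hf t) :=
  ((continuous_copy hκ.continuous hf t).isClosedEmbedding (copy_injective hκ hf ht)).isEmbedding

theorem diam_range_copy_le [CompactSpace K] (hκ : Isometry κ) (hf : Surjective f) (t : scales) :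
    diam (range (copy κ hf t)) ≤ |(t : ℝ)| * diam (univ : Set K) := by
  refine diam_le_of_forall_dist_le (by positivity) ?_
  rintro _ ⟨k, rfl⟩ _ ⟨k', rfl⟩
  rw [dist_copy hκ hf]
  gcongr
  exact dist_le_diam_of_mem isCompact_univ.isBounded trivial trivial

theorem nontrivial_connectedComponents_eq [ConnectedSpace K] [Nontrivial K] (hκ : Isometry κ)
    (hf : Surjective f) :
    {C : Set (cantoroid κ f) | (∃ x, C = connectedComponent x) ∧ C.Nontrivial} =
      range fun n => range (copy κ hf (scale n)) := by
  ext C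
  constructor
  · rintro ⟨⟨x, rfl⟩, hC⟩
    obtain ⟨p, rfl⟩ := surjective_proj κ f x
    by_cases hp : (p.1 : ℝ) * p.2.1 = 0
    · rw [connectedComponent_proj_of_mul_eq_zero hκ.continuous hf hp] at hC ⊢
      obtain h₀ | ⟨n, hn⟩ := eq_zero_or_eq_scale p.1
      · refine absurd ?_ hC.not_subsingleton
        rintro _ ⟨k, rfl⟩ _ ⟨k', rfl⟩
        simpa [h₀] using dist_copy hκ hf p.1 k k'
      · exact ⟨n, by rw [hn]⟩
    · rw [connectedComponent_proj_of_mul_ne_zero hp] at hC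
      exact absurd hC not_nontrivial_singleton
  · rintro ⟨n, rfl⟩
    obtain ⟨k, k', hk⟩ := exists_pair_ne K
    refine ⟨⟨proj κ f (scale n, 0, fun _ => false), ?_⟩, ?_⟩
    · exact (connectedComponent_proj_of_mul_eq_zero (p := (scale n, 0, fun _ => false))
        hκ.continuous hf (by simp)).symm
    · exact ⟨_, mem_range_self k, _, mem_range_self k',
        (copy_injective hκ hf (scale_pos n).ne').ne hk⟩

theorem finite_setOf_le_diam_range_copy [CompactSpace K] (hκ : Isometry κ) (hf : Surjective f)
    {ε : ℝ} (hε : 0 < ε) : {n | ε ≤ diam (range (copy κ hf (scale n)))}.Finite := by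
  have hD : Tendsto (fun n => (scale n : ℝ) * diam (univ : Set K)) cofinite (𝓝 0) := by
    simpa [Nat.cofinite_eq_atTop] using tendsto_scale.mul_const (diam (univ : Set K))
  refine (eventually_cofinite.1 (hD.eventually (gt_mem_nhds hε))).subset fun n hn hlt => ?_
  have := diam_range_copy_le hκ hf (scale n)
  rw [abs_of_pos (scale_pos n)] at this
  exact absurd (hn.trans this) hlt.not_ge

end Metric

end Cantoroid

end

open Cantoroid

/-- For every metrizable continuum `K` with more than one point there exists a compact
metric(izable) space `X` such that: `X` has no isolated points; the union of the
degenerate (singleton) connected components of `X` is dense; `X` has countably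
infinitely many nondegenerate connected components, each homeomorphic to `K`; and the
nondegenerate components form a null sequence (for every `ε > 0` only finitely many of
them have diameter at least `ε`). That is, `X` is a tame cantoroid all of whose
nondegenerate components are copies of `K`. -/
theorem stmt_10 (K : Type) [TopologicalSpace K] [CompactSpace K] [ConnectedSpace K]
    [TopologicalSpace.MetrizableSpace K] [Nontrivial K] :
    ∃ (X : Type) (mX : MetricSpace X),
      letI := mX
      CompactSpace X ∧ Nonempty X ∧
      (∀ x : X, ¬ IsOpen ({x} : Set X)) ∧
      Dense {x : X | connectedComponent x = {x}} ∧
      (let N : Set (Set X) :=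
        {C : Set X | (∃ x : X, C = connectedComponent x) ∧ C.Nontrivial}
       N.Countable ∧ N.Infinite ∧ (∀ C ∈ N, Nonempty (↥C ≃ₜ K)) ∧
        ∀ ε : ℝ, 0 < ε → {C ∈ N | ε ≤ Metric.diam C}.Finite) := by
  let := TopologicalSpace.metrizableSpaceMetric K
  obtain ⟨f, hf, hf_surj⟩ := exists_nat_bool_continuous_surjective_of_compact K
  have hκ := kuratowskiEmbedding.isometry K
  have := perfectSpace_cantoroid hκ.continuous hf
  refine ⟨cantoroid (kuratowskiEmbedding K) f, inferInstance,
    isCompact_iff_compactSpace.1 (isCompact_cantoroid hκ.continuous hf),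
    ⟨proj _ f (0, 0, fun _ => false)⟩, fun x => not_isOpen_singleton x,
    dense_setOf_connectedComponent_eq_singleton hκ.continuous hf, ?_⟩
  dsimp only
  rw [nontrivial_connectedComponents_eq hκ hf_surj]
  refine ⟨countable_range _, infinite_range_of_injective
    ((range_copy_injective hf_surj).comp scale_injective), ?_, fun ε hε => ?_⟩
  · rintro _ ⟨n, rfl⟩
    exact ⟨(isEmbedding_copy hκ hf_surj (scale_pos n).ne').toHomeomorph.symm⟩
  · refine ((finite_setOf_le_diam_range_copy hκ hf_surj hε).image
      fun n => range (copy _ hf_surj (scale n))).subset ?_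
    rintro _ ⟨⟨n, rfl⟩, hn⟩
    exact ⟨n, hn, rfl⟩
end

section
/- Let X be a cantoroid and h : X → X a minimal homeomorphism. If X has at least one nondegenerate connected component, then X has infinitely many nondegenerate connected components. -/
/-- Let `X` be a cantoroid (a nonempty compact metrizable space with no isolated points
whose degenerate components form a dense set) and `h : X → X` a minimal homeomorphism.
If `X` has at least one nondegenerate connected component, then `X` has infinitely many
nondegenerate connected components. -/
theorem stmt_12 {X : Type*} [TopologicalSpace X] [CompactSpace X]
    [TopologicalSpace.MetrizableSpace X] [Nonempty X]
    (hiso : ∀ x : X, ¬ IsOpen ({x} : Set X))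
    (hdense : Dense {x : X | connectedComponent x = {x}})
    (h : X ≃ₜ X)
    (hmin : ∀ x : X, Dense (Set.range fun n : ℕ => (⇑h)^[n] x))
    (hne : ∃ x : X, (connectedComponent x).Nontrivial) :
    {C : Set X | (∃ x : X, C = connectedComponent x) ∧ C.Nontrivial}.Infinite := by
  set S := {C : Set X | (∃ x : X, C = connectedComponent x) ∧ C.Nontrivial} with hSdef
  intro hS
  obtain ⟨x, hx⟩ := hne
  -- every orbit point has nontrivial component
  have key : ∀ n : ℕ, (connectedComponent ((⇑h)^[n] x)).Nontrivial := by
    intro n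
    induction n with
    | zero => simpa using hx
    | succ n ih =>
      rw [Function.iterate_succ_apply']
      have hsub : h '' connectedComponent ((⇑h)^[n] x) ⊆
          connectedComponent (h ((⇑h)^[n] x)) := by
        apply IsPreconnected.subset_connectedComponent
        · exact (isConnected_connectedComponent.image _ h.continuous.continuousOn).isPreconnected
        · exact ⟨_, mem_connectedComponent, rfl⟩
      exact (ih.image h.injective).mono hsub
  -- orbit is contained in sUnion of S
  have hK : IsClosed (⋃ C ∈ S, C) := by
    apply Set.Finite.isClosed_biUnion hS
    rintro C ⟨⟨z, rfl⟩, -⟩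
    exact isClosed_connectedComponent
  have hsub : Set.range (fun n : ℕ => (⇑h)^[n] x) ⊆ ⋃ C ∈ S, C := by
    rintro _ ⟨n, rfl⟩
    exact Set.mem_biUnion ⟨⟨_, rfl⟩, key n⟩ mem_connectedComponent
  have huniv : ⋃ C ∈ S, C = Set.univ := by
    apply Set.eq_univ_of_univ_subset
    calc Set.univ = closure (Set.range fun n : ℕ => (⇑h)^[n] x) := ((hmin x).closure_eq).symm
    _ ⊆ ⋃ C ∈ S, C := hK.closure_subset_iff.mpr hsub
  obtain ⟨y, hy⟩ := hdense.nonempty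
  have : y ∈ ⋃ C ∈ S, C := huniv ▸ Set.mem_univ y
  rw [Set.mem_iUnion₂] at this
  obtain ⟨C, ⟨⟨z, rfl⟩, hCnt⟩, hyC⟩ := this
  have heq : connectedComponent y = connectedComponent z := (connectedComponent_eq hyC).symm
  rw [hy] at heq
  obtain ⟨a, ha, b, hb, hab⟩ := hCnt
  rw [← heq] at ha hb
  exact hab (ha.trans hb.symm)
end

section
/- Let X be a tame cantoroid with a fixed compatible metric, h : X → X a minimal homeomorphism, and K a nondegenerate connected component of X. Then the diameters of the sets h^n(K) converge to 0 as n → ∞. -/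
/-!
If the component `K` returned to itself under some `h^p` with `p > 0`, the finitely many closed
sets `K, h K, …, h^{p-1} K` would cover the dense orbit of a point of `K`, hence all of `X`; then
every component would be one of these nondegenerate ones, contradicting the existence of degenerate
components. So the sets `h^n K` are pairwise distinct components, and tameness allows only
finitely many of them to have diameter `≥ ε`.
-/

open Set Filter Topology Function

theorem Function.Injective.injective_iterate_apply_of_notMem_periodicPts {α : Type*}
    {f : α → α} (hf : Injective f) {x : α} (hx : x ∉ periodicPts f) :
    Injective fun n : ℕ => f^[n] x := by
  intro m n hmn
  by_contra hne
  rcases Nat.lt_or_gt_of_ne hne with hlt | hlt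
  · exact hx (mk_mem_periodicPts (by lia) (iterate_cancel hf hmn.symm))
  · exact hx (mk_mem_periodicPts (by lia) (iterate_cancel hf hmn))

theorem Real.tendsto_atTop_zero_of_finite_setOf_le {u : ℕ → ℝ} (hu : ∀ n, 0 ≤ u n)
    (hfin : ∀ ε > 0, {n | ε ≤ u n}.Finite) : Tendsto u atTop (𝓝 0) := by
  refine tendsto_order.2 ⟨fun a ha => Eventually.of_forall fun n => ha.trans_le (hu n),
    fun ε hε => ?_⟩
  rw [← Nat.cofinite_eq_atTop, eventually_cofinite]
  simpa only [not_lt] using hfin ε hε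

section Topology

variable {X : Type*} [TopologicalSpace X]

theorem Homeomorph.image_connectedComponent (h : X ≃ₜ X) (x : X) :
    h '' connectedComponent x = connectedComponent (h x) := by
  simpa only [connectedComponentIn_univ, image_univ_of_surjective h.surjective] using
    h.image_connectedComponentIn (mem_univ x)

theorem Homeomorph.iterate_image_connectedComponent (h : X ≃ₜ X) (x : X) (n : ℕ) :
    (⇑h)^[n] '' connectedComponent x = connectedComponent ((⇑h)^[n] x) := by
  induction n with
  | zero => simp
  | succ n ih => rw [iterate_succ', image_comp, ih, h.image_connectedComponent, comp_apply]

theorem iUnion_iterate_image_eq_univ_of_isPeriodicPt {f : X → X} {s : Set X} {x : X} {p : ℕ}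
    (hx : x ∈ s) (horbit : Dense (range fun n : ℕ => f^[n] x)) (hp : 0 < p)
    (hs : IsPeriodicPt (image f) p s) (hclosed : ∀ n, IsClosed (f^[n] '' s)) :
    ⋃ n, f^[n] '' s = univ := by
  have hfin : ⋃ n, f^[n] '' s = ⋃ n ∈ Iio p, f^[n] '' s := by
    refine subset_antisymm (iUnion_subset fun n => ?_)
      (iUnion₂_subset fun n _ => subset_iUnion (fun k => f^[k] '' s) n)
    rw [image_iterate_eq, ← hs.iterate_mod_apply n, ← image_iterate_eq]
    exact subset_biUnion_of_mem (u := fun k => f^[k] '' s) (mem_Iio.2 (Nat.mod_lt n hp))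
  have hUclosed : IsClosed (⋃ n, f^[n] '' s) :=
    hfin ▸ (finite_Iio p).isClosed_biUnion fun n _ => hclosed n
  have horbit_sub : range (fun n : ℕ => f^[n] x) ⊆ ⋃ n, f^[n] '' s := by
    rintro _ ⟨n, rfl⟩
    exact mem_iUnion_of_mem n (mem_image_of_mem _ hx)
  simpa only [hUclosed.closure_eq] using (horbit.mono horbit_sub).closure_eq

theorem connectedComponent_notMem_periodicPts_image (h : X ≃ₜ X) {x₀ : X}
    (hmin : Dense (range fun n : ℕ => (⇑h)^[n] x₀))
    (hnt : (connectedComponent x₀).Nontrivial) (hdeg : ∃ y : X, connectedComponent y = {y}) :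
    connectedComponent x₀ ∉ periodicPts (image h) := by
  rintro ⟨p, hp, hper⟩
  obtain ⟨y, hy⟩ := hdeg
  have hcover := iUnion_iterate_image_eq_univ_of_isPeriodicPt mem_connectedComponent hmin hp hper
    fun n => h.iterate_image_connectedComponent x₀ n ▸ isClosed_connectedComponent
  obtain ⟨n, hyn⟩ := mem_iUnion.1 (hcover ▸ mem_univ y)
  have hcomp : connectedComponent y = (⇑h)^[n] '' connectedComponent x₀ := by
    rw [h.iterate_image_connectedComponent] at hyn ⊢
    exact (connectedComponent_eq hyn).symm
  exact not_nontrivial_singleton (hy ▸ hcomp ▸ hnt.image (h.injective.iterate n))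

end Topology

theorem stmt_14_general {X : Type*} [MetricSpace X]
    (hdense : Dense {x : X | connectedComponent x = {x}})
    (htame : ∀ ε : ℝ, 0 < ε →
      {C : Set X | (∃ x : X, C = connectedComponent x) ∧ C.Nontrivial ∧
        ε ≤ Metric.diam C}.Finite)
    (h : X ≃ₜ X)
    (hmin : ∀ x : X, Dense (Set.range fun n : ℕ => (⇑h)^[n] x))
    (x₀ : X) (K : Set X) (hK : K = connectedComponent x₀) (hKnt : K.Nontrivial) :
    Filter.Tendsto (fun n : ℕ => Metric.diam ((⇑h)^[n] '' K)) Filter.atTop (nhds 0) := by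
  subst hK
  have hdeg : ∃ y : X, connectedComponent y = {y} := hdense.nonempty_iff.2 ⟨x₀⟩
  have hinj : Injective fun n : ℕ => (⇑h)^[n] '' connectedComponent x₀ := by
    simpa only [image_iterate_eq] using
      (image_injective.2 h.injective).injective_iterate_apply_of_notMem_periodicPts
        (connectedComponent_notMem_periodicPts_image h (hmin x₀) hKnt hdeg)
  refine Real.tendsto_atTop_zero_of_finite_setOf_le (fun _ => Metric.diam_nonneg)
    fun ε hε => ((htame ε hε).preimage hinj.injOn).subset fun n hn => ?_
  exact ⟨⟨_, h.iterate_image_connectedComponent x₀ n⟩, hKnt.image (h.injective.iterate n),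
    hn⟩

/-- Let `X` be a tame cantoroid (with a fixed compatible metric), `h : X → X` a minimal
homeomorphism and `K` a nondegenerate connected component of `X`. Then the diameters of
the sets `h^n(K)` converge to `0` as `n → ∞`. -/
theorem stmt_14 {X : Type*} [MetricSpace X] [CompactSpace X] [Nonempty X]
    (hiso : ∀ x : X, ¬ IsOpen ({x} : Set X))
    (hdense : Dense {x : X | connectedComponent x = {x}})
    (htame : ∀ ε : ℝ, 0 < ε →
      {C : Set X | (∃ x : X, C = connectedComponent x) ∧ C.Nontrivial ∧
        ε ≤ Metric.diam C}.Finite)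
    (h : X ≃ₜ X)
    (hmin : ∀ x : X, Dense (Set.range fun n : ℕ => (⇑h)^[n] x))
    (x₀ : X) (K : Set X) (hK : K = connectedComponent x₀) (hKnt : K.Nontrivial) :
    Filter.Tendsto (fun n : ℕ => Metric.diam ((⇑h)^[n] '' K)) Filter.atTop (nhds 0) :=
  stmt_14_general hdense htame h hmin x₀ K hK hKnt
end

section
/- Let C and C' be tame cantoroids with fixed compatible metrics, let h : C → C and h' : C' → C' be minimal homeomorphisms, and suppose φ : C → C' is a homeomorphism with φ ∘ h = h' ∘ φ. Let K be a nondegenerate connected component of C, and let x ∈ K and y ∈ φ(K). Then the distance d(φ(h^n(x)), h'^n(y)) converges to 0 as n → ∞. -/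
open Set Metric Filter

private lemma himg {α β : Type*} [TopologicalSpace α] [TopologicalSpace β] (e : α ≃ₜ β) (x : α) :
    e '' connectedComponent x = connectedComponent (e x) := by
  refine subset_antisymm (e.continuous.image_connectedComponent_subset x) ?_
  intro z hz
  have h2 := e.symm.continuous.image_connectedComponent_subset (e x)
  rw [e.symm_apply_apply] at h2
  exact ⟨e.symm z, h2 ⟨z, hz, rfl⟩, e.apply_symm_apply z⟩

private lemma himg_iter {α : Type*} [TopologicalSpace α] (e : α ≃ₜ α) (n : ℕ) (x : α) :
    (⇑e)^[n] '' connectedComponent x = connectedComponent ((⇑e)^[n] x) := by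
  induction n with
  | zero => simp
  | succ n ih =>
    rw [Function.iterate_succ', Set.image_comp, ih, himg e]
    rfl

private lemma empty_interior_of_nt {α : Type*} [TopologicalSpace α]
    (hdense : Dense {x : α | connectedComponent x = {x}}) (z : α)
    (hnt : (connectedComponent z).Nontrivial) : ¬ (interior (connectedComponent z)).Nonempty := by
  intro hne
  obtain ⟨w, hw1, hw2⟩ := hdense.exists_mem_open isOpen_interior hne
  have hwD : w ∈ connectedComponent z := interior_subset hw2
  have hw1' : connectedComponent w = {w} := hw1
  have : connectedComponent z = {w} := (connectedComponent_eq hwD).trans hw1'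
  rw [this] at hnt
  exact not_nontrivial_singleton hnt

/-- Let `C` and `C'` be tame cantoroids (with fixed compatible metrics), `h : C → C` and
`h' : C' → C'` minimal homeomorphisms, and `φ : C → C'` a homeomorphism with
`φ ∘ h = h' ∘ φ`. Let `K` be a nondegenerate connected component of `C`, and let `x ∈ K`
and `y ∈ φ(K)`. Then `dist (φ (h^n x)) (h'^n y) → 0` as `n → ∞`. -/
theorem stmt_15 {C C' : Type*} [MetricSpace C] [CompactSpace C] [Nonempty C]
    [MetricSpace C'] [CompactSpace C'] [Nonempty C']
    (hiso : ∀ x : C, ¬ IsOpen ({x} : Set C))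
    (hdense : Dense {x : C | connectedComponent x = {x}})
    (htame : ∀ ε : ℝ, 0 < ε →
      {D : Set C | (∃ x : C, D = connectedComponent x) ∧ D.Nontrivial ∧
        ε ≤ Metric.diam D}.Finite)
    (hiso' : ∀ x : C', ¬ IsOpen ({x} : Set C'))
    (hdense' : Dense {x : C' | connectedComponent x = {x}})
    (htame' : ∀ ε : ℝ, 0 < ε →
      {D : Set C' | (∃ x : C', D = connectedComponent x) ∧ D.Nontrivial ∧
        ε ≤ Metric.diam D}.Finite)
    (h : C ≃ₜ C) (h' : C' ≃ₜ C')
    (hmin : ∀ x : C, Dense (Set.range fun n : ℕ => (⇑h)^[n] x))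
    (hmin' : ∀ x : C', Dense (Set.range fun n : ℕ => (⇑h')^[n] x))
    (φ : C ≃ₜ C') (hconj : ∀ z : C, φ (h z) = h' (φ z))
    (x₀ : C) (K : Set C) (hK : K = connectedComponent x₀) (hKnt : K.Nontrivial)
    (x : C) (hx : x ∈ K) (y : C') (hy : y ∈ ⇑φ '' K) :
    Filter.Tendsto (fun n : ℕ => dist (φ ((⇑h)^[n] x)) ((⇑h')^[n] y))
      Filter.atTop (nhds 0) := by
  -- the image component and its iterates
  set y₀ : C' := φ x₀ with hy₀
  set D : ℕ → Set C' := fun n => connectedComponent ((⇑h')^[n] y₀) with hD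
  have hK' : ⇑φ '' K = connectedComponent y₀ := by rw [hK]; exact himg φ x₀
  have hDimg : ∀ n, D n = (⇑h')^[n] '' (⇑φ '' K) := by
    intro n; rw [hK', himg_iter]
  -- nontriviality of each D n
  have hntK' : (⇑φ '' K).Nontrivial := hKnt.image φ.injective
  have hntD : ∀ n, (D n).Nontrivial := fun n => by
    rw [hDimg n]
    exact hntK'.image (h'.injective.iterate n)
  -- compactness/closedness of each D n
  have hclD : ∀ n, IsClosed (D n) := fun n => isClosed_connectedComponent
  have hcptD : ∀ n, IsCompact (D n) := fun n => (hclD n).isCompact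
  -- injectivity of n ↦ D n
  have hinj : Function.Injective D := by
    intro n m hnm
    by_contra hne
    wlog hlt : n < m generalizing n m
    · exact this hnm.symm (Ne.symm hne) (by omega)
    set p := m - n with hp
    have hp0 : 0 < p := by omega
    have hper : (⇑h')^[p] '' (⇑φ '' K) = ⇑φ '' K := by
      have h1 : (⇑h')^[n] '' ((⇑h')^[p] '' (⇑φ '' K)) = (⇑h')^[n] '' (⇑φ '' K) := by
        rw [← Set.image_comp, ← Function.iterate_add]
        have : n + p = m := by omega
        rw [this, ← hDimg m, ← hDimg n, hnm]
      exact ((h'.injective.iterate n).image_injective h1)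
    -- the finite invariant union
    set E : Set C' := ⋃ i ∈ Finset.range p, (⇑h')^[i] '' (⇑φ '' K) with hE
    have hEclosed : IsClosed E := by
      apply Set.Finite.isClosed_biUnion (Finset.finite_toSet _)
      intro i _
      rw [← hDimg i]
      exact hclD i
    have hEinv : ∀ z ∈ E, h' z ∈ E := by
      intro z hz
      simp only [hE, Set.mem_iUnion, Finset.mem_range, exists_prop] at hz ⊢
      obtain ⟨i, hi, w, hw, rfl⟩ := hz
      rcases Nat.lt_or_ge (i + 1) p with hip | hip
      · exact ⟨i + 1, hip, w, hw, Function.iterate_succ_apply' _ _ _⟩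
      · have hip' : i + 1 = p := by omega
        have hmem : h' ((⇑h')^[i] w) ∈ ⇑φ '' K := by
          have he : h' ((⇑h')^[i] w) = (⇑h')^[p] w := by
            rw [← hip', Function.iterate_succ_apply']
          rw [he, ← hper]
          exact ⟨w, hw, rfl⟩
        exact ⟨0, hp0, h' ((⇑h')^[i] w), hmem, rfl⟩
    -- E contains a full orbit, hence is everything by minimality
    have hy₀E : y₀ ∈ E := by
      have hm : y₀ ∈ ⇑φ '' K := by rw [hK']; exact mem_connectedComponent
      exact Set.mem_biUnion (Finset.mem_range.2 hp0)
        (⟨y₀, hm, rfl⟩ : y₀ ∈ (⇑h')^[0] '' (⇑φ '' K))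
    have horb : ∀ k : ℕ, (⇑h')^[k] y₀ ∈ E := by
      intro k
      induction k with
      | zero => simpa using hy₀E
      | succ k ih => rw [Function.iterate_succ_apply']; exact hEinv _ ih
    have hEuniv : E = Set.univ := by
      have hdenseE : Dense E := (hmin' y₀).mono (Set.range_subset_iff.2 horb)
      exact hEclosed.closure_eq ▸ hdenseE.closure_eq
    -- Baire: some piece has nonempty interior
    have : ∃ i : Fin p, (interior ((⇑h')^[↑i] '' (⇑φ '' K))).Nonempty := by
      have hp' : Nonempty (Fin p) := ⟨⟨0, hp0⟩⟩
      apply nonempty_interior_of_iUnion_of_closed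
        (f := fun i : Fin p => (⇑h')^[(i : ℕ)] '' (⇑φ '' K))
      · intro i; rw [← hDimg]; exact hclD i
      · rw [← hEuniv, hE]
        ext z
        simp only [Set.mem_iUnion, Finset.mem_range, exists_prop]
        constructor
        · rintro ⟨i, hi⟩; exact ⟨i.1, i.2, hi⟩
        · rintro ⟨i, hi, hz⟩; exact ⟨⟨i, hi⟩, hz⟩
    obtain ⟨i, hi⟩ := this
    rw [← hDimg] at hi
    exact empty_interior_of_nt hdense' _ (hntD i) hi
  -- tameness: diam (D n) is eventually small
  rw [Metric.tendsto_atTop]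
  intro ε hε
  have hbad : {n : ℕ | ε ≤ Metric.diam (D n)}.Finite := by
    have hsub : {n : ℕ | ε ≤ Metric.diam (D n)} ⊆
        D ⁻¹' {S : Set C' | (∃ z : C', S = connectedComponent z) ∧ S.Nontrivial ∧
          ε ≤ Metric.diam S} := by
      intro n hn
      exact ⟨⟨(⇑h')^[n] y₀, rfl⟩, hntD n, hn⟩
    exact ((htame' ε hε).preimage hinj.injOn).subset hsub
  obtain ⟨N, hN⟩ := hbad.bddAbove
  refine ⟨N + 1, fun n hn => ?_⟩
  have hdiam : Metric.diam (D n) < ε := by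
    by_contra hge
    exact absurd (hN (Set.mem_setOf.2 (not_lt.1 hge))) (by omega)
  -- both points live in D n
  have hconj_iter : ∀ z : C, ∀ k : ℕ, φ ((⇑h)^[k] z) = (⇑h')^[k] (φ z) := by
    intro z k
    induction k with
    | zero => simp
    | succ k ih => rw [Function.iterate_succ_apply', Function.iterate_succ_apply', hconj, ih]
  have hmem1 : φ ((⇑h)^[n] x) ∈ D n := by
    rw [hconj_iter, hDimg]
    exact ⟨φ x, ⟨x, hx, rfl⟩, rfl⟩
  have hmem2 : (⇑h')^[n] y ∈ D n := by
    rw [hDimg]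
    exact ⟨y, hy, rfl⟩
  have hdist : dist (φ ((⇑h)^[n] x)) ((⇑h')^[n] y) ≤ Metric.diam (D n) :=
    Metric.dist_le_diam_of_mem (hcptD n).isBounded hmem1 hmem2
  rw [Real.dist_eq, sub_zero, abs_of_nonneg dist_nonneg]
  exact lt_of_le_of_lt hdist hdiam
end
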